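/- arXiv:2408.09573 — 2 statements merged into one kernel-verified Lean document; each statement's English description precedes it below -/
import Mathlib

section
/- Let a > 0, 0 < m < M < ∞ and let n ≥ 1 be an integer with 2/n ≤ M − m. Then for every D ∈ Sym3 with |D| ≥ M − 1/n and every E ∈ Sym3: (1 + |S_n(D)|)^{1+a} = (c_n^{1/a} + |D| − m)^{1+a} / c_n^{1+1/a}, and |L_n(D,E)|² / (1 + |S_n(D)|)^{1+a} ≤ 2 c_n (c_n^{1/a} + |D| − m)^{−(1+a)} Q_n(D,E) ≤ 2^{2+a} c_n (M−m)^{−(1+a)} Q_n(D,E). -/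
noncomputable section

/-- Frobenius inner product on 3×3 real matrices: `A·B = Σ_{i,j} A_{ij} B_{ij}`. -/
def mdot (A B : Matrix (Fin 3) (Fin 3) ℝ) : ℝ := ∑ i, ∑ j, A i j * B i j

/-- Frobenius norm `|A| = (A·A)^{1/2}`. -/
def mnorm (A : Matrix (Fin 3) (Fin 3) ℝ) : ℝ := Real.sqrt (mdot A A)

/-- The approximate constitutive map
`S_n(D) = (|D|−m)_+ (M^a − (min{|D|, M−1/n})^a)^{−1/a} D/|D|`, with `S_n(0) = 0`. -/
def Snmap (a m M : ℝ) (n : ℕ) (D : Matrix (Fin 3) (Fin 3) ℝ) : Matrix (Fin 3) (Fin 3) ℝ :=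
  ((max (mnorm D - m) 0) * (M ^ a - (min (mnorm D) (M - 1/(n:ℝ))) ^ a) ^ (-1/a) / mnorm D) • D

/-- `c_n = M^a − (M−1/n)^a`. -/
def cn (a M : ℝ) (n : ℕ) : ℝ := M ^ a - (M - 1/(n:ℝ)) ^ a

/-- `L_n(D,E) = c_n^{−1/a}((|D|−m)E/|D| + m(D·E)D/|D|³)`. -/
def Lnmap (a m M : ℝ) (n : ℕ) (D E : Matrix (Fin 3) (Fin 3) ℝ) : Matrix (Fin 3) (Fin 3) ℝ :=
  (cn a M n ^ (-1/a)) •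
    (((mnorm D - m) / mnorm D) • E + (m * mdot D E / mnorm D ^ 3) • D)

/-- `Q(D,E) = (|D|−m)(M^a−|D|^a)^{−1/a}|E|²/|D|
      + ((|D|−m)|D|^a + m(M^a−|D|^a))(M^a−|D|^a)^{−1−1/a}|D|^{−3}(D·E)²`. -/
def Qmap (a m M : ℝ) (D E : Matrix (Fin 3) (Fin 3) ℝ) : ℝ :=
  (mnorm D - m) * (M ^ a - mnorm D ^ a) ^ (-1/a) * mnorm E ^ 2 / mnorm D +
    ((mnorm D - m) * mnorm D ^ a + m * (M ^ a - mnorm D ^ a)) *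
      (M ^ a - mnorm D ^ a) ^ (-1 - 1/a) * (mdot D E) ^ 2 / mnorm D ^ 3

/-- `Q_n(D,E) = Q(D,E)` if `|D| < M−1/n`, and
`Q_n(D,E) = c_n^{−1/a}((|D|−m)|E|²/|D| + m(D·E)²/|D|³)` if `|D| ≥ M−1/n`. -/
def Qn (a m M : ℝ) (n : ℕ) (D E : Matrix (Fin 3) (Fin 3) ℝ) : ℝ :=
  if mnorm D < M - 1/(n:ℝ) then Qmap a m M D E
  else cn a M n ^ (-1/a) *
    ((mnorm D - m) * mnorm E ^ 2 / mnorm D + m * (mdot D E) ^ 2 / mnorm D ^ 3)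

lemma mdot_comm (A B : Matrix (Fin 3) (Fin 3) ℝ) : mdot A B = mdot B A := by
  simp [mdot, mul_comm]

lemma mdot_smul_left (r : ℝ) (A B : Matrix (Fin 3) (Fin 3) ℝ) :
    mdot (r • A) B = r * mdot A B := by
  simp [mdot, Finset.mul_sum, mul_assoc]

lemma mdot_smul_right (r : ℝ) (A B : Matrix (Fin 3) (Fin 3) ℝ) :
    mdot A (r • B) = r * mdot A B := by
  rw [mdot_comm, mdot_smul_left, mdot_comm]

lemma mdot_add_left (A B C : Matrix (Fin 3) (Fin 3) ℝ) :
    mdot (A + B) C = mdot A C + mdot B C := by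
  simp [mdot, add_mul, Finset.sum_add_distrib]

lemma mdot_add_right (A B C : Matrix (Fin 3) (Fin 3) ℝ) :
    mdot A (B + C) = mdot A B + mdot A C := by
  rw [mdot_comm, mdot_add_left, mdot_comm A B, mdot_comm A C]

lemma mdot_self_nonneg (A : Matrix (Fin 3) (Fin 3) ℝ) : 0 ≤ mdot A A :=
  Finset.sum_nonneg fun _ _ => Finset.sum_nonneg fun _ _ => mul_self_nonneg _

lemma mnorm_nonneg (A : Matrix (Fin 3) (Fin 3) ℝ) : 0 ≤ mnorm A := Real.sqrt_nonneg _

lemma mnorm_sq (A : Matrix (Fin 3) (Fin 3) ℝ) : mnorm A ^ 2 = mdot A A :=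
  Real.sq_sqrt (mdot_self_nonneg A)

lemma mnorm_smul (r : ℝ) (A : Matrix (Fin 3) (Fin 3) ℝ) :
    mnorm (r • A) = |r| * mnorm A := by
  unfold mnorm
  rw [mdot_smul_left, mdot_smul_right, ← mul_assoc, ← sq,
    Real.sqrt_mul (sq_nonneg r), Real.sqrt_sq_eq_abs]

/-- For `2/n ≤ M − m` and `|D| ≥ M − 1/n`:
`(1 + |S_n(D)|)^{1+a} = (c_n^{1/a} + |D| − m)^{1+a} / c_n^{1+1/a}`, and
`|L_n(D,E)|² / (1 + |S_n(D)|)^{1+a} ≤ 2 c_n (c_n^{1/a} + |D| − m)^{−(1+a)} Q_n(D,E)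
  ≤ 2^{2+a} c_n (M−m)^{−(1+a)} Q_n(D,E)`. -/
theorem Snmap_large_estimates (a m M : ℝ) (ha : 0 < a) (hm : 0 < m) (hmM : m < M)
    (n : ℕ) (hn : 1 ≤ n) (hmn : 2/(n:ℝ) ≤ M - m)
    (D E : Matrix (Fin 3) (Fin 3) ℝ) (hD : D.IsSymm) (hE : E.IsSymm)
    (hDn : M - 1/(n:ℝ) ≤ mnorm D) :
    (1 + mnorm (Snmap a m M n D)) ^ (1 + a) =
      (cn a M n ^ (1/a) + mnorm D - m) ^ (1 + a) / cn a M n ^ (1 + 1/a) ∧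
    mnorm (Lnmap a m M n D E) ^ 2 / (1 + mnorm (Snmap a m M n D)) ^ (1 + a) ≤
      2 * cn a M n * (cn a M n ^ (1/a) + mnorm D - m) ^ (-(1 + a)) * Qn a m M n D E ∧
    2 * cn a M n * (cn a M n ^ (1/a) + mnorm D - m) ^ (-(1 + a)) * Qn a m M n D E ≤
      2 ^ (2 + a) * cn a M n * (M - m) ^ (-(1 + a)) * Qn a m M n D E := by
  have hn' : (0:ℝ) < n := by exact_mod_cast hn
  have h1n : 0 < 1/(n:ℝ) := by positivity
  have h2n : 2/(n:ℝ) = 1/(n:ℝ) + 1/(n:ℝ) := by ring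
  have hMn0 : 0 < M - 1/(n:ℝ) := by linarith
  set d := mnorm D with hd_def
  set e := mnorm E with he_def
  set p := mdot D E with hp_def
  have hd0 : 0 < d := lt_of_lt_of_le hMn0 hDn
  have hdm : m < d := by linarith
  have he0 : 0 ≤ e := mnorm_nonneg E
  have hc : 0 < cn a M n := by
    have : (M - 1/(n:ℝ)) ^ a < M ^ a :=
      Real.rpow_lt_rpow hMn0.le (by linarith) ha
    unfold cn; linarith
  set u := cn a M n ^ (-1/a : ℝ) with hu_def
  set v := cn a M n ^ (1/a : ℝ) with hv_def
  have hu : 0 < u := Real.rpow_pos_of_pos hc _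
  have hv : 0 < v := Real.rpow_pos_of_pos hc _
  have huv : u * v = 1 := by
    rw [hu_def, hv_def, ← Real.rpow_add hc, neg_div, neg_add_cancel, Real.rpow_zero]
  have hX : 0 < v + d - m := by linarith
  have hDD : mdot D D = d ^ 2 := (mnorm_sq D).symm
  have hEE : mdot E E = e ^ 2 := (mnorm_sq E).symm
  -- norm of Snmap
  have hS : mnorm (Snmap a m M n D) = (d - m) * u := by
    rw [Snmap, ← hd_def, min_eq_right hDn, max_eq_left (by linarith : (0:ℝ) ≤ d - m),
      show (M ^ a - (M - 1/(n:ℝ)) ^ a) = cn a M n from rfl, ← hu_def, mnorm_smul, ← hd_def,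
      abs_of_nonneg (div_nonneg (mul_nonneg (by linarith) hu.le) hd0.le),
      div_mul_cancel₀ _ hd0.ne']
  -- part 1
  have h1S : 1 + (d - m) * u = (v + d - m) * u := by
    linear_combination -huv
  have hu1a : u ^ (1 + a) = (cn a M n ^ (1 + 1/a))⁻¹ := by
    rw [hu_def, ← Real.rpow_mul hc.le, ← Real.rpow_neg hc.le]
    congr 1
    field_simp
    ring
  have part1 : (1 + mnorm (Snmap a m M n D)) ^ (1 + a) =
      (v + d - m) ^ (1 + a) / cn a M n ^ (1 + 1/a) := by
    rw [hS, h1S, Real.mul_rpow hX.le hu.le, hu1a, ← div_eq_mul_inv]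
  -- Qn value
  have hQn : Qn a m M n D E = u * ((d - m) * e ^ 2 / d + m * p ^ 2 / d ^ 3) := by
    rw [Qn, if_neg (not_lt.2 hDn)]
  have hQ0 : 0 ≤ Qn a m M n D E := by
    rw [hQn]
    have : 0 ≤ (d - m) * e ^ 2 / d + m * p ^ 2 / d ^ 3 :=
      add_nonneg (div_nonneg (mul_nonneg (by linarith) (sq_nonneg e)) hd0.le)
        (div_nonneg (by positivity) (by positivity))
    positivity
  -- norm of Lnmap squared
  have hLL : mnorm (Lnmap a m M n D E) ^ 2 =
      u ^ 2 * (((d - m)/d) ^ 2 * e ^ 2 + 2 * ((d - m)/d) * (m * p / d ^ 3) * p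
        + (m * p / d ^ 3) ^ 2 * d ^ 2) := by
    rw [mnorm_sq, Lnmap, ← hd_def, ← hp_def, ← hu_def]
    simp only [mdot_smul_left, mdot_smul_right, mdot_add_left, mdot_add_right]
    rw [mdot_comm E D, hDD, hEE, ← hp_def]
    ring
  -- key inequality
  have hW : ((d - m)/d) ^ 2 * e ^ 2 + 2 * ((d - m)/d) * (m * p / d ^ 3) * p
        + (m * p / d ^ 3) ^ 2 * d ^ 2
      ≤ 2 * ((d - m) * e ^ 2 / d + m * p ^ 2 / d ^ 3) := by
    have hd' : d ≠ 0 := hd0.ne'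
    rw [← sub_nonneg]
    have heq : 2 * ((d - m) * e ^ 2 / d + m * p ^ 2 / d ^ 3) -
        (((d - m)/d) ^ 2 * e ^ 2 + 2 * ((d - m)/d) * (m * p / d ^ 3) * p
          + (m * p / d ^ 3) ^ 2 * d ^ 2)
        = (d - m) * (d + m) * e ^ 2 / d ^ 2 + m ^ 2 * p ^ 2 / d ^ 4 := by
      field_simp
      ring
    rw [heq]
    exact add_nonneg
      (div_nonneg (mul_nonneg (mul_nonneg (by linarith) (by linarith)) (sq_nonneg e))
        (by positivity))
      (div_nonneg (by positivity) (by positivity))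
  have hc1a : cn a M n ^ (1 + 1/a) = cn a M n * v := by
    rw [hv_def, Real.rpow_add hc, Real.rpow_one]
  have key : mnorm (Lnmap a m M n D E) ^ 2 * cn a M n ^ (1 + 1/a)
      ≤ 2 * cn a M n * Qn a m M n D E := by
    rw [hLL, hQn, hc1a]
    calc u ^ 2 * (((d - m)/d) ^ 2 * e ^ 2 + 2 * ((d - m)/d) * (m * p / d ^ 3) * p
          + (m * p / d ^ 3) ^ 2 * d ^ 2) * (cn a M n * v)
        = (cn a M n * u) * (((d - m)/d) ^ 2 * e ^ 2 + 2 * ((d - m)/d) * (m * p / d ^ 3) * p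
          + (m * p / d ^ 3) ^ 2 * d ^ 2) * (u * v) := by ring
      _ = (cn a M n * u) * (((d - m)/d) ^ 2 * e ^ 2 + 2 * ((d - m)/d) * (m * p / d ^ 3) * p
          + (m * p / d ^ 3) ^ 2 * d ^ 2) := by rw [huv, mul_one]
      _ ≤ (cn a M n * u) * (2 * ((d - m) * e ^ 2 / d + m * p ^ 2 / d ^ 3)) :=
          mul_le_mul_of_nonneg_left hW (by positivity)
      _ = 2 * cn a M n * (u * ((d - m) * e ^ 2 / d + m * p ^ 2 / d ^ 3)) := by ring
  have hT : 0 < (v + d - m) ^ (1 + a : ℝ) := Real.rpow_pos_of_pos hX _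
  have part2 : mnorm (Lnmap a m M n D E) ^ 2 / (1 + mnorm (Snmap a m M n D)) ^ (1 + a) ≤
      2 * cn a M n * (v + d - m) ^ (-(1 + a)) * Qn a m M n D E := by
    rw [part1, div_div_eq_mul_div, Real.rpow_neg hX.le]
    rw [show 2 * cn a M n * ((v + d - m) ^ (1 + a : ℝ))⁻¹ * Qn a m M n D E
      = 2 * cn a M n * Qn a m M n D E / (v + d - m) ^ (1 + a : ℝ) by ring]
    exact div_le_div_of_nonneg_right key hT.le
  -- part 3
  have hYX : (M - m) / 2 ≤ v + d - m := by linarith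
  have hY : (0:ℝ) < (M - m) / 2 := by linarith
  have hXY : (v + d - m) ^ (-(1 + a) : ℝ) ≤ ((M - m)/2) ^ (-(1 + a) : ℝ) := by
    rw [Real.rpow_neg hX.le, Real.rpow_neg hY.le]
    exact inv_anti₀ (Real.rpow_pos_of_pos hY _)
      (Real.rpow_le_rpow hY.le hYX (by linarith))
  have hYval : ((M - m)/2 : ℝ) ^ (-(1 + a) : ℝ) = (M - m) ^ (-(1 + a) : ℝ) * 2 ^ (1 + a : ℝ) := by
    rw [Real.div_rpow (by linarith) (by norm_num), Real.rpow_neg (by norm_num : (0:ℝ) ≤ 2),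
      div_eq_mul_inv, inv_inv]
  have h2a : (2:ℝ) ^ (2 + a : ℝ) = 2 * 2 ^ (1 + a : ℝ) := by
    rw [show (2 + a : ℝ) = 1 + (1 + a) by ring, Real.rpow_add (by norm_num), Real.rpow_one]
  have part3 : 2 * cn a M n * (v + d - m) ^ (-(1 + a)) * Qn a m M n D E ≤
      2 ^ (2 + a) * cn a M n * (M - m) ^ (-(1 + a)) * Qn a m M n D E := by
    calc 2 * cn a M n * (v + d - m) ^ (-(1 + a) : ℝ) * Qn a m M n D E
        = (2 * cn a M n * Qn a m M n D E) * (v + d - m) ^ (-(1 + a) : ℝ) := by ring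
      _ ≤ (2 * cn a M n * Qn a m M n D E) * ((M - m)/2) ^ (-(1 + a) : ℝ) :=
          mul_le_mul_of_nonneg_left hXY
            (mul_nonneg (mul_nonneg (by norm_num) hc.le) hQ0)
      _ = 2 ^ (2 + a : ℝ) * cn a M n * (M - m) ^ (-(1 + a) : ℝ) * Qn a m M n D E := by
          rw [hYval, h2a]; ring
  exact ⟨part1, part2, part3⟩
end
end

section
/- Let a > 0, σ > 0 and M > 0. Then for all D, S ∈ Sym3 with |D| < M, the following equivalence holds: S = σ (M^a − |D|^a)^{−1/a} D if and only if D = M (σ^a + |S|^a)^{−1/a} S. -/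
noncomputable section

/-!
Both relations have the form `y = φ(‖x‖) • x` with a nonnegative scalar `φ`, so each one fixes
the norm of its output, `‖y‖ = φ(‖x‖) ‖x‖`, and the two are inverse to each other as soon as the
scalar coefficients multiply to `1` along these norms. With `t = M^a − ‖D‖^a` the forward
coefficient is `σ t^{-1/a}`, and `σ^a + (σ t^{-1/a} ‖D‖)^a = (σ M)^a / t`, whose `(-1/a)`-th
power times `M` is exactly the reciprocal; the reverse direction is the same computation with
`u = σ^a + ‖S‖^a`.
-/

open scoped Matrix.Norms.Frobenius

theorem mnorm_eq_norm (A : Matrix (Fin 3) (Fin 3) ℝ) : mnorm A = ‖A‖ := by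
  rw [Matrix.frobenius_norm_def, ← Real.sqrt_eq_rpow, mnorm, mdot]
  simp only [Real.norm_eq_abs, Real.rpow_two, sq, abs_mul_abs_self]

theorem eq_smul_norm_iff_eq_smul_norm {E : Type*} [SeminormedAddCommGroup E] [NormedSpace ℝ E]
    {f g : ℝ → ℝ} {x y : E} (hf : 0 ≤ f ‖x‖) (hg : 0 ≤ g ‖y‖)
    (hgf : g (f ‖x‖ * ‖x‖) * f ‖x‖ = 1) (hfg : f (g ‖y‖ * ‖y‖) * g ‖y‖ = 1) :
    y = f ‖x‖ • x ↔ x = g ‖y‖ • y := by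
  constructor
  · rintro rfl
    rw [norm_smul, Real.norm_of_nonneg hf, smul_smul, hgf, one_smul]
  · rintro rfl
    rw [norm_smul, Real.norm_of_nonneg hg, smul_smul, hfg, one_smul]

namespace Real

variable {a : ℝ}

theorem mul_rpow_neg_inv_rpow (ha : 0 < a) {c t : ℝ} (hc : 0 ≤ c) (ht : 0 < t) :
    (c * t ^ (-1 / a)) ^ a = c ^ a / t := by
  rw [mul_rpow hc (rpow_pos_of_pos ht _).le, ← rpow_mul ht.le, div_mul_cancel₀ _ ha.ne',
    rpow_neg_one, div_eq_mul_inv]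

theorem mul_rpow_mul_div_rpow_neg_inv (ha : 0 < a) {x y t : ℝ} (hx : 0 < x) (hy : 0 < y)
    (ht : 0 < t) : x * (x ^ a * y ^ a / t) ^ (-1 / a) * (y * t ^ (-1 / a)) = 1 := by
  have hxy : x ^ a * y ^ a / t = (x * y * t ^ (-1 / a)) ^ a := by
    rw [mul_rpow_neg_inv_rpow ha (by positivity) ht, mul_rpow hx.le hy.le]
  rw [hxy, ← rpow_mul (by positivity), mul_div_cancel₀ _ ha.ne', rpow_neg_one]
  have : t ^ (-1 / a) ≠ 0 := (rpow_pos_of_pos ht _).ne'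
  field_simp

end Real

section LimitingStrain

open Real

variable {a σ M : ℝ}

theorem limitingStrain_coeff_mul_stress_coeff (ha : 0 < a) (hσ : 0 < σ) (hM : 0 < M) {d : ℝ}
    (hd : 0 ≤ d) (hdM : d < M) :
    M * (σ ^ a + (σ * (M ^ a - d ^ a) ^ (-1 / a) * d) ^ a) ^ (-1 / a) *
      (σ * (M ^ a - d ^ a) ^ (-1 / a)) = 1 := by
  have ht : 0 < M ^ a - d ^ a := sub_pos.2 (rpow_lt_rpow hd hdM ha)
  have hsum : σ ^ a + (σ * (M ^ a - d ^ a) ^ (-1 / a) * d) ^ a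
      = M ^ a * σ ^ a / (M ^ a - d ^ a) := by
    rw [mul_right_comm, mul_rpow_neg_inv_rpow ha (by positivity) ht, mul_rpow hσ.le hd]
    field_simp
    ring
  rw [hsum, mul_rpow_mul_div_rpow_neg_inv ha hM hσ ht]

theorem stress_coeff_mul_limitingStrain_coeff (ha : 0 < a) (hσ : 0 < σ) (hM : 0 < M) {s : ℝ}
    (hs : 0 ≤ s) :
    σ * (M ^ a - (M * (σ ^ a + s ^ a) ^ (-1 / a) * s) ^ a) ^ (-1 / a) *
      (M * (σ ^ a + s ^ a) ^ (-1 / a)) = 1 := by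
  have hu : 0 < σ ^ a + s ^ a := by positivity
  have hdiff : M ^ a - (M * (σ ^ a + s ^ a) ^ (-1 / a) * s) ^ a
      = σ ^ a * M ^ a / (σ ^ a + s ^ a) := by
    rw [mul_right_comm, mul_rpow_neg_inv_rpow ha (by positivity) hu, mul_rpow hM.le hs]
    field_simp
    ring
  rw [hdiff, mul_rpow_mul_div_rpow_neg_inv ha hσ hM hu]

end LimitingStrain

theorem constitutive_invertible_general (a σ M : ℝ) (ha : 0 < a) (hσ : 0 < σ) (hM : 0 < M)
    (D S : Matrix (Fin 3) (Fin 3) ℝ)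
    (hDM : mnorm D < M) :
    S = (σ * (M ^ a - mnorm D ^ a) ^ (-1/a)) • D ↔
      D = (M * (σ ^ a + mnorm S ^ a) ^ (-1/a)) • S := by
  simp only [mnorm_eq_norm] at hDM ⊢
  have hD := norm_nonneg D
  have hS := norm_nonneg S
  have ht : 0 < M ^ a - ‖D‖ ^ a := sub_pos.2 (Real.rpow_lt_rpow hD hDM ha)
  exact eq_smul_norm_iff_eq_smul_norm (f := fun d => σ * (M ^ a - d ^ a) ^ (-1 / a))
    (g := fun s => M * (σ ^ a + s ^ a) ^ (-1 / a))
    (mul_pos hσ (Real.rpow_pos_of_pos ht _)).le (by positivity)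
    (limitingStrain_coeff_mul_stress_coeff ha hσ hM hD hDM)
    (stress_coeff_mul_limitingStrain_coeff ha hσ hM hS)

/-- Invertibility of the limiting-strain-type relation (activation `m = 0`): for `|D| < M`,
`S = σ(M^a − |D|^a)^{−1/a} D  ↔  D = M(σ^a + |S|^a)^{−1/a} S`. -/
theorem constitutive_invertible (a σ M : ℝ) (ha : 0 < a) (hσ : 0 < σ) (hM : 0 < M)
    (D S : Matrix (Fin 3) (Fin 3) ℝ) (hD : D.IsSymm) (hS : S.IsSymm)
    (hDM : mnorm D < M) :
    S = (σ * (M ^ a - mnorm D ^ a) ^ (-1/a)) • D ↔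
      D = (M * (σ ^ a + mnorm S ^ a) ^ (-1/a)) • S :=
  constitutive_invertible_general a σ M ha hσ hM D S hDM
end
end
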